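/- Let V₁, V₂ : E → E be continuous vector fields, let X₁ be a global flow of V₁, and let X₂ be a global flow of V₂ which is continuously differentiable as a map ℝ × E → E and satisfies the group property X₂(t + s, y) = X₂(t, X₂(s, y)). Then for every t ≥ 0 and every y ∈ E, the Stefanov–Uhlmann identity holds: X₁(t, y) − X₂(t, y) = ∫₀ᵗ D_yX₂(t − s, X₁(s, y))((V₁ − V₂)(X₁(s, y))) ds. -/

import Mathlib

/-! Put `F(s) = X₂(t - s, X₁(s, y))`, so that `F 0 = X₂(t, y)` and `F t = X₁(t, y)`. By the chain
rule `F'(s) = D_yX₂(t - s, X₁ s) (V₁ (X₁ s)) - ∂ₜX₂(t - s, X₁ s)`, and differentiating the group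
property `X₂(τ + s, z) = X₂(τ, X₂(s, z))` at `s = 0` gives `∂ₜX₂(τ, z) = D_yX₂(τ, z) (V₂ z)`.
Hence `F'` is the integrand, which is continuous because `X₂` is `C¹`, and the identity is the
fundamental theorem of calculus. -/

section

variable {E F : Type*} [NormedAddCommGroup E] [NormedSpace ℝ E]
  [NormedAddCommGroup F] [NormedSpace ℝ F]

theorem DifferentiableAt.hasFDerivAt_comp_prodMk_right {f : ℝ × E → F} {τ : ℝ} {z : E}
    (hf : DifferentiableAt ℝ f (τ, z)) :
    HasFDerivAt (fun w => f (τ, w)) ((fderiv ℝ f (τ, z)).comp (ContinuousLinearMap.inr ℝ ℝ E)) z :=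
  hf.hasFDerivAt.comp z (hasFDerivAt_prodMk_right τ z)

theorem ContDiff.continuous_fderiv_comp_prodMk_right {f : ℝ × E → F} (hf : ContDiff ℝ 1 f) :
    Continuous fun p : ℝ × E => fderiv ℝ (fun w => f (p.1, w)) p.2 := by
  have hdiff : ∀ p : ℝ × E, DifferentiableAt ℝ f p := hf.differentiable one_ne_zero
  simp_rw [fun p : ℝ × E => (hdiff (p.1, p.2)).hasFDerivAt_comp_prodMk_right.fderiv]
  exact (hf.continuous_fderiv one_ne_zero).clm_comp continuous_const

theorem DifferentiableAt.hasDerivAt_comp_sub_prodMk {f : ℝ × E → F} {γ : ℝ → E} {c s : ℝ}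
    {γ' : E} {v : F}
    (hf : DifferentiableAt ℝ f (c - s, γ s)) (hγ : HasDerivAt γ γ' s)
    (hτ : HasDerivAt (fun τ => f (τ, γ s)) v (c - s)) :
    HasDerivAt (fun s => f (c - s, γ s)) (fderiv ℝ (fun w => f (c - s, w)) (γ s) γ' - v) s := by
  set L := fderiv ℝ f (c - s, γ s)
  have hL : L (1, 0) = v := by
    refine HasDerivAt.unique ?_ hτ
    exact hf.hasFDerivAt.comp_hasDerivAt (c - s)
      ((hasDerivAt_id _).prodMk (hasDerivAt_const _ _))
  have hpath : HasDerivAt (fun s => (c - s, γ s)) ((-1 : ℝ), γ') s := by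
    simpa using ((hasDerivAt_const s c).sub (hasDerivAt_id s)).prodMk hγ
  have hsplit : ((-1 : ℝ), γ') = ((0 : ℝ), γ') - ((1 : ℝ), (0 : E)) := by simp
  refine (hf.hasFDerivAt.comp_hasDerivAt s hpath).congr_deriv ?_
  rw [hf.hasFDerivAt_comp_prodMk_right.fderiv, hsplit, map_sub, hL]
  rfl

theorem fderiv_flow_apply_vectorField {V : E → E} {X : ℝ × E → E}
    (hX0 : ∀ y, X (0, y) = y)
    (hX : ∀ (s : ℝ) (y : E), HasDerivAt (fun t => X (t, y)) (V (X (s, y))) s)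
    (hgrp : ∀ (s t : ℝ) (y : E), X (t + s, y) = X (t, X (s, y)))
    {τ : ℝ} {z : E} (hdiff : DifferentiableAt ℝ X (τ, z)) :
    fderiv ℝ (fun w => X (τ, w)) z (V z) = V (X (τ, z)) := by
  have hz : X (0, z) = z := hX0 z
  have hright :
      HasDerivAt (fun s => X (τ, X (s, z))) (fderiv ℝ (fun w => X (τ, w)) z (V z)) 0 := by
    have h := hdiff.hasFDerivAt_comp_prodMk_right.comp_hasDerivAt_of_eq 0 (hX 0 z) hz.symm
    rwa [hz, ← hdiff.hasFDerivAt_comp_prodMk_right.fderiv] at h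
  have hleft : HasDerivAt (fun s => X (τ + s, z)) (V (X (τ, z))) 0 := by
    have h := (hX (τ + 0) z).comp_const_add τ 0
    rwa [add_zero] at h
  simp only [hgrp] at hleft
  exact hright.unique hleft

end

/-- **The Stefanov–Uhlmann identity.**
Let `X₁` be a global flow of the continuous vector field `V₁`, and `X₂` a `C¹` global
flow of the continuous vector field `V₂` satisfying the group property.  Then for every
`t ≥ 0` and `y`,
`X₁(t, y) − X₂(t, y) = ∫₀ᵗ D_yX₂(t − s, X₁(s, y))((V₁ − V₂)(X₁(s, y))) ds`. -/
theorem stefanov_uhlmann_identity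
    {E : Type*} [NormedAddCommGroup E] [NormedSpace ℝ E] [FiniteDimensional ℝ E]
    (V₁ V₂ : E → E) (hV₁ : Continuous V₁) (hV₂ : Continuous V₂)
    (X₁ X₂ : ℝ × E → E)
    (hX₁0 : ∀ y : E, X₁ (0, y) = y)
    (hX₁ : ∀ (s : ℝ) (y : E), HasDerivAt (fun t : ℝ => X₁ (t, y)) (V₁ (X₁ (s, y))) s)
    (hX₂0 : ∀ y : E, X₂ (0, y) = y)
    (hX₂ : ∀ (s : ℝ) (y : E), HasDerivAt (fun t : ℝ => X₂ (t, y)) (V₂ (X₂ (s, y))) s)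
    (hC1 : ContDiff ℝ 1 X₂)
    (hgrp : ∀ (s t : ℝ) (y : E), X₂ (t + s, y) = X₂ (t, X₂ (s, y))) :
    ∀ (t : ℝ), 0 ≤ t → ∀ (y : E),
      X₁ (t, y) - X₂ (t, y) =
        ∫ s in (0:ℝ)..t,
          fderiv ℝ (fun w : E => X₂ (t - s, w)) (X₁ (s, y))
            (V₁ (X₁ (s, y)) - V₂ (X₁ (s, y))) := by
  intro t _ y
  have hdiff : ∀ p, DifferentiableAt ℝ X₂ p := hC1.differentiable one_ne_zero
  have hX₁c : Continuous fun s => X₁ (s, y) :=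
    continuous_iff_continuousAt.2 fun s => (hX₁ s y).continuousAt
  have hderiv : ∀ s, HasDerivAt (fun s => X₂ (t - s, X₁ (s, y)))
      (fderiv ℝ (fun w => X₂ (t - s, w)) (X₁ (s, y))
        (V₁ (X₁ (s, y)) - V₂ (X₁ (s, y)))) s := fun s => by
    rw [map_sub, fderiv_flow_apply_vectorField hX₂0 hX₂ hgrp (hdiff _)]
    exact (hdiff (t - s, X₁ (s, y))).hasDerivAt_comp_sub_prodMk (hX₁ s y)
      (hX₂ (t - s) (X₁ (s, y)))
  have hcont : Continuous fun s => fderiv ℝ (fun w => X₂ (t - s, w)) (X₁ (s, y))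
      (V₁ (X₁ (s, y)) - V₂ (X₁ (s, y))) :=
    (hC1.continuous_fderiv_comp_prodMk_right.comp
      ((continuous_const.sub continuous_id).prodMk hX₁c)).clm_apply
      ((hV₁.comp hX₁c).sub (hV₂.comp hX₁c))
  rw [intervalIntegral.integral_eq_sub_of_hasDerivAt (fun s _ => hderiv s)
    (hcont.intervalIntegrable 0 t)]
  simp [hX₁0, hX₂0]
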